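/- arXiv:2202.01017 — 5 statements merged into one kernel-verified Lean document; each statement's English description precedes it below -/
import Mathlib

section
/- Let ℓᵢ: ℝ^d → ℝ (i = 1,...,K) be differentiable and L-smooth, with gradients gᵢ = ∇ℓᵢ(θ) at a point θ. Let α be a positive vector with GᵀGα = 1/α elementwise, where G has columns gᵢ, and set Δθ = Gα and μ = minⱼ 1/(L·K·αⱼ). Then for every i, ℓᵢ(θ - μΔθ) ≤ ℓᵢ(θ) - μ/(2αᵢ) < ℓᵢ(θ). In particular the Nash-MTL update strictly decreases every task loss. -/
open RealInnerProductSpace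

/-!
The descent lemma for an `L`-smooth loss gives
`ℓᵢ(θ - μΔθ) ≤ ℓᵢ(θ) - μ⟪gᵢ, Δθ⟫ + (L/2) μ² ‖Δθ‖²`.
The Nash bargaining equations `⟪gᵢ, Δθ⟫ = 1/αᵢ` make the linear term `-μ/αᵢ` and, summing them
against `α`, give `‖Δθ‖² = K`; the choice `μ ≤ 1/(LKαᵢ)` then bounds the quadratic term by
`μ/(2αᵢ)`, half of the linear gain.
-/

variable {E : Type*} [NormedAddCommGroup E] [InnerProductSpace ℝ E]

theorem norm_sq_sum_smul_eq_card {ι : Type*} [Fintype ι] {α : ι → ℝ} {g : ι → E}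
    (hα : ∀ i, α i ≠ 0) (h : ∀ i, ⟪g i, ∑ j, α j • g j⟫ = 1 / α i) :
    ‖∑ j, α j • g j‖ ^ 2 = Fintype.card ι := by
  rw [← real_inner_self_eq_norm_sq]
  simp_rw [sum_inner, real_inner_smul_left, h, mul_one_div_cancel (hα _)]
  simp

variable [CompleteSpace E]

theorem HasGradientAt.hasDerivAt_add_smul {f : E → ℝ} {f' x v : E} {t : ℝ}
    (hf : HasGradientAt f f' (x + t • v)) :
    HasDerivAt (fun s : ℝ => f (x + s • v)) ⟪f', v⟫ t := by
  have hline : HasDerivAt (fun s : ℝ => x + s • v) v t := by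
    simpa using ((hasDerivAt_id t).smul_const v).const_add x
  exact hf.hasFDerivAt.comp_hasDerivAt t hline

theorem le_add_inner_add_of_lipschitz_gradient {f : E → ℝ} {f' : E → E} {L : ℝ}
    (hf : ∀ x, HasGradientAt f (f' x) x) (hf' : ∀ x y, ‖f' x - f' y‖ ≤ L * ‖x - y‖)
    (x y : E) : f y ≤ f x + ⟪f' x, y - x⟫ + L / 2 * ‖y - x‖ ^ 2 := by
  set v := y - x
  set φ : ℝ → ℝ := fun t => f (x + t • v) - t * ⟪f' x, v⟫ - L / 2 * t ^ 2 * ‖v‖ ^ 2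
  have hφ : ∀ t, HasDerivAt φ (⟪f' (x + t • v), v⟫ - ⟪f' x, v⟫ - L * t * ‖v‖ ^ 2) t := by
    intro t
    refine ((((hf (x + t • v)).hasDerivAt_add_smul (x := x)).sub
      ((hasDerivAt_id t).mul_const ⟪f' x, v⟫)).sub
      (((hasDerivAt_pow 2 t).const_mul (L / 2)).mul_const (‖v‖ ^ 2))).congr_deriv ?_
    push_cast
    ring
  have hφ_anti : AntitoneOn φ (Set.Ici 0) := by
    refine antitoneOn_of_deriv_nonpos (convex_Ici 0)
      (fun t _ => (hφ t).continuousAt.continuousWithinAt)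
      (fun t _ => (hφ t).differentiableAt.differentiableWithinAt) fun t ht => ?_
    rw [interior_Ici, Set.mem_Ioi] at ht
    rw [(hφ t).deriv, ← inner_sub_left]
    calc ⟪f' (x + t • v) - f' x, v⟫ - L * t * ‖v‖ ^ 2
        ≤ L * ‖t • v‖ * ‖v‖ - L * t * ‖v‖ ^ 2 := by
          gcongr
          exact (real_inner_le_norm _ _).trans
            (mul_le_mul_of_nonneg_right (by simpa using hf' (x + t • v) x) (norm_nonneg v))
      _ = 0 := by rw [norm_smul, Real.norm_of_nonneg ht.le]; ring
  have h01 : φ 1 ≤ φ 0 := hφ_anti Set.self_mem_Ici (Set.mem_Ici.2 zero_le_one) zero_le_one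
  simp only [φ, v, zero_smul, add_zero, zero_mul, sub_zero, ne_eq, OfNat.ofNat_ne_zero,
    not_false_eq_true, zero_pow, mul_zero, one_smul, add_sub_cancel, one_mul, one_pow, mul_one,
    tsub_le_iff_right] at h01
  linarith

theorem le_sub_smul_of_lipschitz_gradient {f : E → ℝ} {f' : E → E} {L : ℝ}
    (hf : ∀ x, HasGradientAt f (f' x) x) (hf' : ∀ x y, ‖f' x - f' y‖ ≤ L * ‖x - y‖)
    (x v : E) (μ : ℝ) : f (x - μ • v) ≤ f x - μ * ⟪f' x, v⟫ + L / 2 * μ ^ 2 * ‖v‖ ^ 2 := by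
  have := le_add_inner_add_of_lipschitz_gradient hf hf' x (x - μ • v)
  rw [sub_sub_cancel_left, inner_neg_right, real_inner_smul_right, norm_neg, norm_smul,
    mul_pow, Real.norm_eq_abs, sq_abs] at this
  linarith

/-- Per-task descent of the Nash-MTL update: with `L`-smooth losses, gradients `g i` at `θ`,
`α > 0` solving `GᵀGα = 1/α`, `Δθ = ∑ αᵢgᵢ` and `μ = minⱼ 1/(LKαⱼ)`, every task loss strictly
decreases: `ℓᵢ(θ - μΔθ) ≤ ℓᵢ(θ) - μ/(2αᵢ) < ℓᵢ(θ)`. -/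
theorem stmt_6 {d K : ℕ} (hK : 0 < K) (L : ℝ) (hL : 0 < L)
    (ℓ : Fin K → EuclideanSpace ℝ (Fin d) → ℝ)
    (ℓ' : Fin K → EuclideanSpace ℝ (Fin d) → EuclideanSpace ℝ (Fin d))
    (hdiff : ∀ i x, HasGradientAt (ℓ i) (ℓ' i x) x)
    (hsmooth : ∀ i x y, ‖ℓ' i x - ℓ' i y‖ ≤ L * ‖x - y‖)
    (θ : EuclideanSpace ℝ (Fin d))
    (g : Fin K → EuclideanSpace ℝ (Fin d)) (hg : ∀ i, g i = ℓ' i θ)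
    (α : Fin K → ℝ) (hα : ∀ i, 0 < α i)
    (heq : ∀ i, ⟪g i, ∑ j, α j • g j⟫ = 1 / α i)
    (Δθ : EuclideanSpace ℝ (Fin d)) (hΔθ : Δθ = ∑ j, α j • g j)
    (μ : ℝ) (hμ : μ = ⨅ j, 1 / (L * K * α j)) :
    ∀ i, ℓ i (θ - μ • Δθ) ≤ ℓ i θ - μ / (2 * α i) ∧
      ℓ i θ - μ / (2 * α i) < ℓ i θ := by
  intro i
  have : Nonempty (Fin K) := ⟨⟨0, hK⟩⟩
  have hK_pos : (0 : ℝ) < K := by exact_mod_cast hK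
  have hαi := hα i
  have hμ_pos : 0 < μ := by
    obtain ⟨j, hj⟩ := exists_eq_ciInf_of_finite (f := fun j : Fin K => 1 / (L * K * α j))
    have := hα j
    rw [hμ, ← hj]
    positivity
  have hμ_le : μ * (L * K) ≤ 1 / α i := by
    rw [le_div_iff₀ hαi, mul_assoc, ← le_div_iff₀ (by positivity), hμ]
    exact ciInf_le (Set.finite_range fun j => 1 / (L * K * α j)).bddBelow i
  have hnorm : ‖Δθ‖ ^ 2 = K := by
    simpa [hΔθ] using norm_sq_sum_smul_eq_card (fun j => (hα j).ne') heq
  have hstep := le_sub_smul_of_lipschitz_gradient (hdiff i) (hsmooth i) θ Δθ μ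
  rw [← hg, hΔθ, heq i, ← hΔθ, hnorm] at hstep
  constructor
  · calc ℓ i (θ - μ • Δθ) ≤ ℓ i θ - μ * (1 / α i) + μ / 2 * (μ * (L * K)) := by linarith
      _ ≤ ℓ i θ - μ * (1 / α i) + μ / 2 * (1 / α i) := by gcongr
      _ = ℓ i θ - μ / (2 * α i) := by field_simp; ring
  · have : 0 < μ / (2 * α i) := by positivity
    linarith
end

section
/- Under the same setup (ℓᵢ differentiable and L-smooth, GᵀGα = 1/α with α > 0, Δθ = Gα, μ = minⱼ 1/(L·K·αⱼ)), the average loss ℒ(θ) = (1/K)∑ᵢ ℓᵢ(θ) satisfies ℒ(θ - μΔθ) ≤ ℒ(θ) - (L·K·μ²)/2. -/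
open RealInnerProductSpace

/-! The descent lemma for an `L`-smooth loss gives
`ℓᵢ(θ - μΔθ) ≤ ℓᵢ(θ) - μ⟪∇ℓᵢ(θ), Δθ⟫ + Lμ²‖Δθ‖²/2`. The bargaining equations say
`⟪∇ℓᵢ(θ), Δθ⟫ = 1/αᵢ`, hence `‖Δθ‖² = ∑ᵢ αᵢ⟪∇ℓᵢ(θ), Δθ⟫ = K`, and the choice of `μ` gives
`1/αᵢ ≥ LKμ`. So every loss, and therefore their average, drops by at least `LKμ²/2`. -/

section GradientLipschitz

variable {E : Type*} [NormedAddCommGroup E] [InnerProductSpace ℝ E] [CompleteSpace E]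
  {L : ℝ} {f : E → ℝ} {f' : E → E}

theorem apply_add_le_of_gradient_lipschitz (hf : ∀ x, HasGradientAt f (f' x) x)
    (hf' : ∀ x y, ‖f' x - f' y‖ ≤ L * ‖x - y‖) (x v : E) :
    f (x + v) ≤ f x + ⟪f' x, v⟫ + L / 2 * ‖v‖ ^ 2 := by
  -- `ψ t` is the gap between `f (x + t • v)` and its quadratic upper model along the ray.
  set ψ : ℝ → ℝ := fun t => f (x + t • v) - t * ⟪f' x, v⟫ - L / 2 * t ^ 2 * ‖v‖ ^ 2
  set ψ' : ℝ → ℝ := fun t => ⟪f' (x + t • v), v⟫ - ⟪f' x, v⟫ - L * t * ‖v‖ ^ 2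
  have hψ : ∀ t, HasDerivAt ψ (ψ' t) t := by
    intro t
    have hline : HasDerivAt (fun t : ℝ => x + t • v) v t := by
      simpa using ((hasDerivAt_id t).smul_const v).const_add x
    have hcomp : HasDerivAt (fun t : ℝ => f (x + t • v)) ⟪f' (x + t • v), v⟫ t := by
      exact (hf (x + t • v)).hasFDerivAt.comp_hasDerivAt t hline
    refine ((hcomp.sub ((hasDerivAt_id t).mul_const ⟪f' x, v⟫)).sub
      (((hasDerivAt_pow 2 t).const_mul (L / 2)).mul_const (‖v‖ ^ 2))).congr_deriv ?_
    simp only [ψ', Nat.cast_ofNat]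
    ring
  have hψ'_nonpos : ∀ t ∈ interior (Set.Ici (0 : ℝ)), ψ' t ≤ 0 := by
    intro t ht
    rw [interior_Ici] at ht
    have hlip : ‖f' (x + t • v) - f' x‖ ≤ L * (t * ‖v‖) := by
      simpa [norm_smul, abs_of_pos (Set.mem_Ioi.1 ht)] using hf' (x + t • v) x
    calc ψ' t = ⟪f' (x + t • v) - f' x, v⟫ - L * t * ‖v‖ ^ 2 := by
          simp only [ψ', inner_sub_left]
      _ ≤ ‖f' (x + t • v) - f' x‖ * ‖v‖ - L * t * ‖v‖ ^ 2 := by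
          gcongr; exact real_inner_le_norm _ _
      _ ≤ L * (t * ‖v‖) * ‖v‖ - L * t * ‖v‖ ^ 2 := by gcongr
      _ = 0 := by ring
  have hanti : AntitoneOn ψ (Set.Ici 0) :=
    antitoneOn_of_hasDerivWithinAt_nonpos (convex_Ici 0)
      (fun t _ => (hψ t).continuousAt.continuousWithinAt)
      (fun t _ => (hψ t).hasDerivWithinAt) hψ'_nonpos
  have hψ01 := hanti (Set.mem_Ici.2 le_rfl) (Set.mem_Ici.2 zero_le_one) zero_le_one
  simp only [ψ, one_smul, zero_smul, add_zero, one_mul, zero_mul] at hψ01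
  linarith

theorem apply_sub_smul_le_of_gradient_lipschitz (hf : ∀ x, HasGradientAt f (f' x) x)
    (hf' : ∀ x y, ‖f' x - f' y‖ ≤ L * ‖x - y‖) (x v : E) (μ : ℝ) :
    f (x - μ • v) ≤ f x - μ * ⟪f' x, v⟫ + L / 2 * μ ^ 2 * ‖v‖ ^ 2 := by
  have h := apply_add_le_of_gradient_lipschitz hf hf' x (-(μ • v))
  rwa [← sub_eq_add_neg, inner_neg_right, real_inner_smul_right, norm_neg, norm_smul,
    Real.norm_eq_abs, mul_pow, sq_abs, ← sub_eq_add_neg, ← mul_assoc] at h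

end GradientLipschitz

theorem norm_sq_eq_card_of_inner_eq_inv {E ι : Type*} [NormedAddCommGroup E]
    [InnerProductSpace ℝ E] [Fintype ι] {g : ι → E} {α : ι → ℝ} (hα : ∀ i, α i ≠ 0)
    (h : ∀ i, ⟪g i, ∑ j, α j • g j⟫ = 1 / α i) :
    ‖∑ j, α j • g j‖ ^ 2 = Fintype.card ι := by
  rw [← real_inner_self_eq_norm_sq, sum_inner]
  simp [real_inner_smul_left, h, hα]

theorem mul_iInf_one_div_mul_le {ι : Type*} [Finite ι] {c : ℝ} (hc : 0 < c) (α : ι → ℝ)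
    (i : ι) : c * ⨅ j, 1 / (c * α j) ≤ 1 / α i :=
  calc c * ⨅ j, 1 / (c * α j) ≤ c * (1 / (c * α i)) :=
        mul_le_mul_of_nonneg_left (ciInf_le (Set.finite_range _).bddBelow i) hc.le
    _ = 1 / α i := by field_simp

theorem Finset.one_div_card_mul_sum_le_sub {ι : Type*} {s : Finset ι} (hs : s.Nonempty)
    {a b : ι → ℝ} {c : ℝ} (h : ∀ i ∈ s, a i ≤ b i - c) :
    1 / (s.card : ℝ) * ∑ i ∈ s, a i ≤ 1 / (s.card : ℝ) * ∑ i ∈ s, b i - c := by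
  have hcard : (0 : ℝ) < s.card := by exact_mod_cast hs.card_pos
  have hsum : ∑ i ∈ s, a i ≤ ∑ i ∈ s, b i - s.card * c := by
    simpa [Finset.sum_sub_distrib] using Finset.sum_le_sum h
  calc 1 / (s.card : ℝ) * ∑ i ∈ s, a i
      ≤ 1 / (s.card : ℝ) * (∑ i ∈ s, b i - s.card * c) := by gcongr
    _ = 1 / (s.card : ℝ) * ∑ i ∈ s, b i - c := by field_simp

/-- Descent of the average loss for the Nash-MTL update: with `L`-smooth losses, gradients
`g i` at `θ`, `α > 0` solving `GᵀGα = 1/α`, `Δθ = ∑ αᵢgᵢ` and `μ = minⱼ 1/(LKαⱼ)`,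
the average loss `ℒ(θ) = (1/K)∑ᵢ ℓᵢ(θ)` satisfies `ℒ(θ - μΔθ) ≤ ℒ(θ) - LKμ²/2`. -/
theorem stmt_7 {d K : ℕ} (hK : 0 < K) (L : ℝ) (hL : 0 < L)
    (ℓ : Fin K → EuclideanSpace ℝ (Fin d) → ℝ)
    (ℓ' : Fin K → EuclideanSpace ℝ (Fin d) → EuclideanSpace ℝ (Fin d))
    (hdiff : ∀ i x, HasGradientAt (ℓ i) (ℓ' i x) x)
    (hsmooth : ∀ i x y, ‖ℓ' i x - ℓ' i y‖ ≤ L * ‖x - y‖)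
    (θ : EuclideanSpace ℝ (Fin d))
    (g : Fin K → EuclideanSpace ℝ (Fin d)) (hg : ∀ i, g i = ℓ' i θ)
    (α : Fin K → ℝ) (hα : ∀ i, 0 < α i)
    (heq : ∀ i, ⟪g i, ∑ j, α j • g j⟫ = 1 / α i)
    (Δθ : EuclideanSpace ℝ (Fin d)) (hΔθ : Δθ = ∑ j, α j • g j)
    (μ : ℝ) (hμ : μ = ⨅ j, 1 / (L * K * α j))
    (ℒ : EuclideanSpace ℝ (Fin d) → ℝ) (hℒ : ∀ x, ℒ x = (1 / K : ℝ) * ∑ i, ℓ i x) :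
    ℒ (θ - μ • Δθ) ≤ ℒ θ - L * K * μ ^ 2 / 2 := by
  have hLK : 0 < L * K := mul_pos hL (Nat.cast_pos.2 hK)
  have hnorm : ‖Δθ‖ ^ 2 = K := by
    simpa [hΔθ] using norm_sq_eq_card_of_inner_eq_inv (fun i => (hα i).ne') heq
  have hμ_nonneg : 0 ≤ μ :=
    hμ ▸ Real.iInf_nonneg fun j => (one_div_pos.2 (mul_pos hLK (hα j))).le
  have hstep : ∀ i, ℓ i (θ - μ • Δθ) ≤ ℓ i θ - L * K * μ ^ 2 / 2 := by
    intro i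
    have hdesc := apply_sub_smul_le_of_gradient_lipschitz (hdiff i) (hsmooth i) θ Δθ μ
    rw [← hg, hΔθ, heq, ← hΔθ, hnorm] at hdesc
    have hμi : L * K * μ ≤ 1 / α i := hμ ▸ mul_iInf_one_div_mul_le hLK α i
    linarith [mul_le_mul_of_nonneg_left hμi hμ_nonneg]
  have hav := Finset.one_div_card_mul_sum_le_sub ⟨⟨0, hK⟩, Finset.mem_univ _⟩ fun i _ => hstep i
  simpa [hℒ] using hav
end

section
/- In the convex setting of the Nash-MTL convergence theorem, the distance to the limit point is monotone: ‖θ^(t+1) - θ*‖² ≤ ‖θ^(t) - θ*‖², where θ* is a partial limit satisfying ℓᵢ(θ*) ≤ ℓᵢ(θ^(t+1)) for all i and t. -/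
open RealInnerProductSpace

/-! Write `gᵢ = ∇ℓᵢ(θ⁽ᵗ⁾)` and `a = θ⁽ᵗ⁾ - θ*`. Convexity bounds `ℓᵢ(θ⁽ᵗ⁾) - ℓᵢ(θ*)` above by
`⟪gᵢ, a⟫`, while the descent inequality and `ℓᵢ(θ*) ≤ ℓᵢ(θ⁽ᵗ⁺¹⁾)` bound it below by `μ⁽ᵗ⁾/(2αᵢ)`.
Summing with the weights `αᵢ` gives `⟪Δθ⁽ᵗ⁾, a⟫ ≥ μ⁽ᵗ⁾K/2`, and since `‖Δθ⁽ᵗ⁾‖² = K`, in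
`‖a - μ⁽ᵗ⁾Δθ⁽ᵗ⁾‖² = ‖a‖² - 2μ⁽ᵗ⁾⟪Δθ⁽ᵗ⁾, a⟫ + μ⁽ᵗ⁾²K` the cross term dominates the quadratic one. -/

theorem ConvexOn.add_fderiv_sub_le {E : Type*} [NormedAddCommGroup E] [NormedSpace ℝ E]
    {s : Set E} {f : E → ℝ} {f' : E →L[ℝ] ℝ} {x y : E} (hf : ConvexOn ℝ s f)
    (hx : x ∈ s) (hy : y ∈ s) (hd : HasFDerivAt f f' x) :
    f x + f' (y - x) ≤ f y := by
  set c : ℝ →ᵃ[ℝ] E := AffineMap.lineMap x y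
  have hc : ⇑c = fun r : ℝ => r • (y - x) + x := funext (AffineMap.lineMap_apply_module' x y)
  have hline : HasDerivAt c (y - x) 0 := by
    rw [hc]
    simpa using ((hasDerivAt_id (0 : ℝ)).smul_const (y - x)).add_const x
  have hderiv : HasDerivAt (f ∘ c) (f' (y - x)) 0 :=
    (by simpa [c] using hd : HasFDerivAt f f' (c 0)).comp_hasDerivAt 0 hline
  have hslope := (hf.comp_affineMap c).le_slope_of_hasDerivAt (by simpa [c] using hx)
    (by simpa [c] using hy) one_pos hderiv
  simp only [slope_def_field, Function.comp_apply, c, AffineMap.lineMap_apply_one,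
    AffineMap.lineMap_apply_zero, sub_zero, div_one] at hslope
  linarith

theorem ConvexOn.add_inner_gradient_sub_le {E : Type*} [NormedAddCommGroup E]
    [InnerProductSpace ℝ E] [CompleteSpace E] {s : Set E} {f : E → ℝ} {g x y : E}
    (hf : ConvexOn ℝ s f) (hx : x ∈ s) (hy : y ∈ s) (hd : HasGradientAt f g x) :
    f x + ⟪g, y - x⟫ ≤ f y := by
  simpa using hf.add_fderiv_sub_le hx hy hd.hasFDerivAt

section WeightedSum

variable {E ι : Type*} [NormedAddCommGroup E] [InnerProductSpace ℝ E] [Fintype ι]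

theorem norm_sub_smul_sq_le_of_mul_norm_sq_le {a v : E} {μ : ℝ} (hμ : 0 ≤ μ)
    (h : μ * ‖v‖ ^ 2 ≤ 2 * ⟪v, a⟫) : ‖a - μ • v‖ ^ 2 ≤ ‖a‖ ^ 2 := by
  rw [norm_sub_sq_real, real_inner_smul_right, real_inner_comm, norm_smul, mul_pow,
    Real.norm_eq_abs, sq_abs]
  nlinarith [mul_le_mul_of_nonneg_left h hμ]

theorem inner_sum_smul_left (α : ι → ℝ) (g : ι → E) (a : E) :
    ⟪∑ i, α i • g i, a⟫ = ∑ i, α i * ⟪g i, a⟫ := by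
  simp only [sum_inner, real_inner_smul_left]

theorem norm_sum_smul_sq_eq_card {α : ι → ℝ} {g : ι → E} (hα : ∀ i, 0 < α i)
    (heq : ∀ i, ⟪g i, ∑ j, α j • g j⟫ = 1 / α i) :
    ‖∑ i, α i • g i‖ ^ 2 = Fintype.card ι := by
  rw [← real_inner_self_eq_norm_sq, inner_sum_smul_left]
  simp [heq, (hα _).ne']

theorem card_mul_le_inner_sum_smul {α : ι → ℝ} {g : ι → E} {a : E} {c : ℝ}
    (h : ∀ i, c ≤ α i * ⟪g i, a⟫) : Fintype.card ι * c ≤ ⟪∑ i, α i • g i, a⟫ := by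
  rw [inner_sum_smul_left, ← nsmul_eq_mul, ← Finset.card_univ, ← Finset.sum_const]
  exact Finset.sum_le_sum fun i _ => h i

end WeightedSum

theorem stmt_13_general {d K : ℕ} (L : ℝ) (hL : 0 < L)
    (ℓ : Fin K → EuclideanSpace ℝ (Fin d) → ℝ)
    (ℓ' : Fin K → EuclideanSpace ℝ (Fin d) → EuclideanSpace ℝ (Fin d))
    (hdiff : ∀ i x, HasGradientAt (ℓ i) (ℓ' i x) x)
    (hconvex : ∀ i, ConvexOn ℝ Set.univ (ℓ i))
    (θ : ℕ → EuclideanSpace ℝ (Fin d)) (α : ℕ → Fin K → ℝ) (μ : ℕ → ℝ)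
    (hα : ∀ t i, 0 < α t i)
    (heq : ∀ t i, ⟪ℓ' i (θ t), ∑ j, α t j • ℓ' j (θ t)⟫ = 1 / α t i)
    (hμ : ∀ t, μ t = ⨅ j, 1 / (L * K * α t j))
    (hstep : ∀ t, θ (t + 1) = θ t - μ t • ∑ j, α t j • ℓ' j (θ t))
    (hdesc : ∀ t i, ℓ i (θ (t + 1)) ≤ ℓ i (θ t) - μ t / (2 * α t i))
    (θstar : EuclideanSpace ℝ (Fin d))
    (hstar : ∀ t i, ℓ i θstar ≤ ℓ i (θ (t + 1))) :
    ∀ t, ‖θ (t + 1) - θstar‖ ^ 2 ≤ ‖θ t - θstar‖ ^ 2 := by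
  intro t
  have hμ_nonneg : 0 ≤ μ t := by
    rw [hμ t]
    exact Real.iInf_nonneg fun j => by have := hα t j; positivity
  have hgap : ∀ i, μ t / 2 ≤ α t i * ⟪ℓ' i (θ t), θ t - θstar⟫ := by
    intro i
    have htangent := (hconvex i).add_inner_gradient_sub_le (Set.mem_univ (θ t))
      (Set.mem_univ θstar) (hdiff i (θ t))
    rw [← neg_sub, inner_neg_right] at htangent
    have hdrop : μ t / (2 * α t i) ≤ ⟪ℓ' i (θ t), θ t - θstar⟫ := by
      linarith [hdesc t i, hstar t i]
    have hαi := hα t i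
    calc μ t / 2 = α t i * (μ t / (2 * α t i)) := by field_simp
      _ ≤ _ := mul_le_mul_of_nonneg_left hdrop hαi.le
  have hnorm := norm_sum_smul_sq_eq_card (hα t) (heq t)
  have hinner := card_mul_le_inner_sum_smul hgap
  rw [Fintype.card_fin] at hnorm hinner
  rw [hstep t, sub_right_comm]
  exact norm_sub_smul_sq_le_of_mul_norm_sq_le hμ_nonneg (by rw [hnorm]; linarith)

/-- In the convex setting, one Nash-MTL step does not increase the distance to any point
`θ*` whose losses are all below the post-step losses:
`‖θ⁽ᵗ⁺¹⁾ - θ*‖² ≤ ‖θ⁽ᵗ⁾ - θ*‖²`. -/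
theorem stmt_13 {d K : ℕ} (hK : 0 < K) (L : ℝ) (hL : 0 < L)
    (ℓ : Fin K → EuclideanSpace ℝ (Fin d) → ℝ)
    (ℓ' : Fin K → EuclideanSpace ℝ (Fin d) → EuclideanSpace ℝ (Fin d))
    (hdiff : ∀ i x, HasGradientAt (ℓ i) (ℓ' i x) x)
    (hsmooth : ∀ i x y, ‖ℓ' i x - ℓ' i y‖ ≤ L * ‖x - y‖)
    (hconvex : ∀ i, ConvexOn ℝ Set.univ (ℓ i))
    (θ : ℕ → EuclideanSpace ℝ (Fin d)) (α : ℕ → Fin K → ℝ) (μ : ℕ → ℝ)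
    (hα : ∀ t i, 0 < α t i)
    (heq : ∀ t i, ⟪ℓ' i (θ t), ∑ j, α t j • ℓ' j (θ t)⟫ = 1 / α t i)
    (hμ : ∀ t, μ t = ⨅ j, 1 / (L * K * α t j))
    (hstep : ∀ t, θ (t + 1) = θ t - μ t • ∑ j, α t j • ℓ' j (θ t))
    (hdesc : ∀ t i, ℓ i (θ (t + 1)) ≤ ℓ i (θ t) - μ t / (2 * α t i))
    (θstar : EuclideanSpace ℝ (Fin d))
    (hstar : ∀ t i, ℓ i θstar ≤ ℓ i (θ (t + 1))) :
    ∀ t, ‖θ (t + 1) - θstar‖ ^ 2 ≤ ‖θ t - θstar‖ ^ 2 :=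
  stmt_13_general L hL ℓ ℓ' hdiff hconvex θ α μ hα heq hμ hstep hdesc θstar hstar
end

section
/- Let g₁, g₂ ∈ ℝ^d be linearly independent (K = 2 tasks). Then the Nash bargaining update direction Δθ = α₁g₁ + α₂g₂ with GᵀGα = 1/α, α > 0, is a positive multiple of g₁/‖g₁‖ + g₂/‖g₂‖, i.e., for two tasks the Nash-MTL update equals the sum of the normalized gradients up to positive scaling. -/
open RealInnerProductSpace

/-! The balance condition `GᵀGα = 1/α` says that every task contributes equally,
`α₁ ⟪g₁, Δθ⟫ = α₂ ⟪g₂, Δθ⟫ = 1`. Expanding `Δθ = α₁g₁ + α₂g₂`, the cross terms `α₁α₂⟪g₁, g₂⟫`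
cancel and leave `(α₁‖g₁‖)² = (α₂‖g₂‖)²`; hence `α₁‖g₁‖ = α₂‖g₂‖ =: c` and
`Δθ = c (g₁/‖g₁‖ + g₂/‖g₂‖)`. -/

section

variable {E : Type*} [NormedAddCommGroup E] [InnerProductSpace ℝ E]

theorem mul_norm_eq_of_mul_inner_smul_add_smul_eq {u v : E} {a b : ℝ} (ha : 0 ≤ a) (hb : 0 ≤ b)
    (h : a * ⟪u, a • u + b • v⟫ = b * ⟪v, a • u + b • v⟫) : a * ‖u‖ = b * ‖v‖ := by
  have hsq : (a * ‖u‖) ^ 2 = (b * ‖v‖) ^ 2 := by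
    simp only [inner_add_right, real_inner_smul_right, real_inner_self_eq_norm_sq,
      real_inner_comm u v] at h
    linear_combination h
  exact (pow_left_inj₀ (by positivity) (by positivity) two_ne_zero).mp hsq

theorem smul_eq_mul_norm_smul_inv_norm_smul (a : ℝ) (u : E) :
    a • u = (a * ‖u‖) • (‖u‖⁻¹ • u) := by
  rcases eq_or_ne u 0 with rfl | hu
  · simp
  · rw [smul_smul, mul_assoc, mul_inv_cancel₀ (norm_ne_zero_iff.mpr hu), mul_one]

theorem smul_add_smul_eq_smul_normalized {u v : E} {a b : ℝ} (h : a * ‖u‖ = b * ‖v‖) :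
    a • u + b • v = (a * ‖u‖) • (‖u‖⁻¹ • u + ‖v‖⁻¹ • v) := by
  rw [smul_add, ← smul_eq_mul_norm_smul_inv_norm_smul, h, ← smul_eq_mul_norm_smul_inv_norm_smul]

end

theorem stmt_15_general {d : ℕ} (g : Fin 2 → EuclideanSpace ℝ (Fin d))
    (α : Fin 2 → ℝ) (hα : ∀ i, 0 < α i)
    (heq : ∀ i, ⟪g i, ∑ j, α j • g j⟫ = 1 / α i) :
    ∃ c : ℝ, 0 < c ∧
      (∑ j, α j • g j) = c • ((1 / ‖g 0‖) • g 0 + (1 / ‖g 1‖) • g 1) := by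
  have hcontrib (i : Fin 2) : α i * ⟪g i, ∑ j, α j • g j⟫ = 1 := by
    rw [heq i, mul_one_div_cancel (hα i).ne']
  have hg0 : g 0 ≠ 0 := by
    rintro h0
    simpa [h0] using hcontrib 0
  rw [Fin.sum_univ_two] at hcontrib
  have hbal : α 0 * ‖g 0‖ = α 1 * ‖g 1‖ :=
    mul_norm_eq_of_mul_inner_smul_add_smul_eq (hα 0).le (hα 1).le
      ((hcontrib 0).trans (hcontrib 1).symm)
  refine ⟨α 0 * ‖g 0‖, mul_pos (hα 0) (norm_pos_iff.mpr hg0), ?_⟩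
  simpa only [Fin.sum_univ_two, one_div] using smul_add_smul_eq_smul_normalized hbal

/-- For two linearly independent tasks, the Nash-MTL update direction `α₁g₁ + α₂g₂` (with
`GᵀGα = 1/α`, `α > 0`) is a positive multiple of the sum of the normalized gradients. -/
theorem stmt_15 {d : ℕ} (g : Fin 2 → EuclideanSpace ℝ (Fin d))
    (hind : LinearIndependent ℝ g)
    (α : Fin 2 → ℝ) (hα : ∀ i, 0 < α i)
    (heq : ∀ i, ⟪g i, ∑ j, α j • g j⟫ = 1 / α i)
    (hpos : ∀ i, 0 < ⟪g i, ∑ j, α j • g j⟫) :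
    ∃ c : ℝ, 0 < c ∧
      (∑ j, α j • g j) = c • ((1 / ‖g 0‖) • g 0 + (1 / ‖g 1‖) • g 1) :=
  stmt_15_general g α hα heq
end

section
/- Let g₁, ..., g_K ∈ ℝ^d be linearly independent and suppose Δθ* maximizes ∑ᵢ log(gᵢᵀΔθ) over the ball B_ε subject to gᵢᵀΔθ > 0 for all i. Then Δθ* is a positive multiple of ∑ᵢ αᵢgᵢ where α > 0 satisfies GᵀGα = 1/α elementwise. -/
/-! At a maximizer `x`, the gradient of `y ↦ ∑ᵢ log ⟪gᵢ, y⟫` is `u = ∑ᵢ ⟪gᵢ, x⟫⁻¹ • gᵢ`.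
For `w ⟂ x` with `‖w‖ ≤ ‖x‖` the curve `t ↦ cos t • x + sin t • w` stays in the ball and is
feasible near `t = 0`, so the objective along it has a local maximum at `0`, whence `⟪u, w⟫ = 0`.
Hence `u = μ • x`, and `⟪u, x⟫ = K` forces `μ > 0`. Then `αᵢ = μ^(-1/2) / ⟪gᵢ, x⟫` gives
`∑ⱼ αⱼ • gⱼ = √μ • x`, so `⟪gᵢ, ∑ⱼ αⱼ • gⱼ⟫ = √μ ⟪gᵢ, x⟫ = 1 / αᵢ`. -/

open RealInnerProductSpace Real Filter Topology

section LogBarrier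

variable {E : Type*} [NormedAddCommGroup E] [InnerProductSpace ℝ E] {ι : Type*} [Fintype ι]

theorem norm_cos_smul_add_sin_smul_le {x w : E} (hxw : ⟪x, w⟫ = 0) (hw : ‖w‖ ≤ ‖x‖) (t : ℝ) :
    ‖cos t • x + sin t • w‖ ≤ ‖x‖ := by
  have horth : ⟪cos t • x, sin t • w⟫ = 0 := by
    rw [real_inner_smul_left, real_inner_smul_right, hxw, mul_zero, mul_zero]
  rw [mul_self_le_mul_self_iff (norm_nonneg _) (norm_nonneg _),
    norm_add_sq_eq_norm_sq_add_norm_sq_real horth, norm_smul, norm_smul, norm_eq_abs, norm_eq_abs]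
  nlinarith [sin_sq_add_cos_sq t, abs_mul_abs_self (sin t), abs_mul_abs_self (cos t),
    mul_self_le_mul_self (norm_nonneg w) hw, mul_self_nonneg (sin t)]

theorem hasDerivAt_sum_log_inner_cos_smul_add_sin_smul (g : ι → E) {x : E}
    (hx : ∀ i, ⟪g i, x⟫ ≠ 0) (w : E) :
    HasDerivAt (fun t => ∑ i, log ⟪g i, cos t • x + sin t • w⟫)
      ⟪∑ i, ⟪g i, x⟫⁻¹ • g i, w⟫ 0 := by
  have hγ : HasDerivAt (fun t : ℝ => cos t • x + sin t • w) w 0 := by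
    simpa using ((hasDerivAt_cos 0).smul_const x).fun_add ((hasDerivAt_sin 0).smul_const w)
  have hsum := HasDerivAt.fun_sum (u := Finset.univ) fun i _ =>
    ((hasDerivAt_const (0 : ℝ) (g i)).inner ℝ hγ).log (by simpa using hx i)
  refine hsum.congr_deriv ?_
  simp [sum_inner, real_inner_smul_left, div_eq_inv_mul]

theorem inner_sum_inv_inner_smul_eq_zero_of_isMaxOn {g : ι → E} {ε : ℝ} {x w : E}
    (hmax : IsMaxOn (fun y => ∑ i, log ⟪g i, y⟫) {y | ‖y‖ ≤ ε ∧ ∀ i, 0 < ⟪g i, y⟫} x)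
    (hx : ‖x‖ ≤ ε) (hpos : ∀ i, 0 < ⟪g i, x⟫) (hxw : ⟪x, w⟫ = 0) (hw : ‖w‖ ≤ ‖x‖) :
    ⟪∑ i, ⟪g i, x⟫⁻¹ • g i, w⟫ = 0 := by
  refine IsLocalMax.hasDerivAt_eq_zero ?_
    (hasDerivAt_sum_log_inner_cos_smul_add_sin_smul g (fun i => (hpos i).ne') w)
  have hfeas : ∀ᶠ t in 𝓝 0, ∀ i, 0 < ⟪g i, cos t • x + sin t • w⟫ := by
    refine eventually_all.mpr fun i => ?_
    have hc : ContinuousAt (fun t : ℝ => ⟪g i, cos t • x + sin t • w⟫) 0 := by fun_prop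
    exact continuousAt_const.eventually_lt hc (by simpa using hpos i)
  filter_upwards [hfeas] with t ht
  simpa using hmax ⟨(norm_cos_smul_add_sin_smul_le hxw hw t).trans hx, ht⟩

theorem exists_sum_inv_inner_smul_eq_smul_of_isMaxOn {g : ι → E} {ε : ℝ} {x : E}
    (hmax : IsMaxOn (fun y => ∑ i, log ⟪g i, y⟫) {y | ‖y‖ ≤ ε ∧ ∀ i, 0 < ⟪g i, y⟫} x)
    (hx : ‖x‖ ≤ ε) (hpos : ∀ i, 0 < ⟪g i, x⟫) (hx0 : x ≠ 0) :
    ∃ μ : ℝ, ∑ i, ⟪g i, x⟫⁻¹ • g i = μ • x := by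
  have hperp : ∑ i, ⟪g i, x⟫⁻¹ • g i ∈ (ℝ ∙ x)ᗮᗮ := by
    refine fun w hw => ?_
    rw [Submodule.mem_orthogonal_singleton_iff_inner_right] at hw
    rcases eq_or_ne w 0 with rfl | hw0
    · exact inner_zero_left _
    have hs : ‖x‖ / ‖w‖ ≠ 0 := div_ne_zero (norm_ne_zero_iff.mpr hx0) (norm_ne_zero_iff.mpr hw0)
    have hsw : ‖(‖x‖ / ‖w‖) • w‖ ≤ ‖x‖ := by
      rw [norm_smul, norm_div, norm_norm, norm_norm, div_mul_cancel₀ _ (norm_ne_zero_iff.mpr hw0)]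
    have := inner_sum_inv_inner_smul_eq_zero_of_isMaxOn hmax hx hpos
      (by rw [real_inner_smul_right, hw, mul_zero]) hsw
    rw [real_inner_smul_right, mul_eq_zero, or_iff_right hs] at this
    rwa [real_inner_comm]
  rw [Submodule.orthogonal_orthogonal, Submodule.mem_span_singleton] at hperp
  obtain ⟨μ, hμ⟩ := hperp
  exact ⟨μ, hμ.symm⟩

theorem inner_sum_inv_inner_smul_self {g : ι → E} {x : E} (hx : ∀ i, ⟪g i, x⟫ ≠ 0) :
    ⟪∑ i, ⟪g i, x⟫⁻¹ • g i, x⟫ = Fintype.card ι := by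
  simp [sum_inner, real_inner_smul_left, inv_mul_cancel₀ (hx _)]

theorem exists_inner_sum_smul_eq_one_div_of_sum_inv_inner_smul_eq_smul [Nonempty ι]
    {g : ι → E} {x : E} {μ : ℝ} (hpos : ∀ i, 0 < ⟪g i, x⟫)
    (hμ : ∑ i, ⟪g i, x⟫⁻¹ • g i = μ • x) :
    ∃ (c : ℝ) (α : ι → ℝ), 0 < c ∧ (∀ i, 0 < α i) ∧
      (∀ i, ⟪g i, ∑ j, α j • g j⟫ = 1 / α i) ∧ x = c • ∑ j, α j • g j := by
  have hμpos : 0 < μ := by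
    have hcard := inner_sum_inv_inner_smul_self (fun i => (hpos i).ne')
    rw [hμ, real_inner_smul_left, real_inner_self_eq_norm_sq] at hcard
    exact pos_of_mul_pos_left (hcard ▸ Nat.cast_pos.mpr Fintype.card_pos) (sq_nonneg _)
  set r := √μ
  have hr : 0 < r := sqrt_pos.mpr hμpos
  have hsum : ∑ j, (r⁻¹ / ⟪g j, x⟫) • g j = r • x := by
    calc ∑ j, (r⁻¹ / ⟪g j, x⟫) • g j = r⁻¹ • ∑ j, ⟪g j, x⟫⁻¹ • g j := by
          simp_rw [Finset.smul_sum, smul_smul, div_eq_mul_inv]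
      _ = r • x := by
          rw [hμ, smul_smul, ← mul_self_sqrt hμpos.le, ← mul_assoc, inv_mul_cancel₀ hr.ne', one_mul]
  refine ⟨r⁻¹, fun i => r⁻¹ / ⟪g i, x⟫, inv_pos.mpr hr, fun i => div_pos (inv_pos.mpr hr) (hpos i),
    fun i => ?_, ?_⟩
  · rw [hsum, real_inner_smul_right, one_div_div, div_inv_eq_mul, mul_comm]
  · rw [hsum, smul_smul, inv_mul_cancel₀ hr.ne', one_smul]

end LogBarrier

theorem stmt_17_general {d K : ℕ} (hK : 0 < K) (g : Fin K → EuclideanSpace ℝ (Fin d))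
    (ε : ℝ)
    (Δθ : EuclideanSpace ℝ (Fin d))
    (hmem : ‖Δθ‖ ≤ ε) (hfeas : ∀ i, 0 < ⟪g i, Δθ⟫)
    (hmax : ∀ x : EuclideanSpace ℝ (Fin d), ‖x‖ ≤ ε → (∀ i, 0 < ⟪g i, x⟫) →
      ∑ i, Real.log ⟪g i, x⟫ ≤ ∑ i, Real.log ⟪g i, Δθ⟫) :
    ∃ (c : ℝ) (α : Fin K → ℝ), 0 < c ∧ (∀ i, 0 < α i) ∧
      (∀ i, ⟪g i, ∑ j, α j • g j⟫ = 1 / α i) ∧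
      Δθ = c • ∑ j, α j • g j := by
  have : Nonempty (Fin K) := Fin.pos_iff_nonempty.mp hK
  have hΔθ : Δθ ≠ 0 := by
    rintro rfl
    simpa using hfeas ⟨0, hK⟩
  obtain ⟨μ, hμ⟩ := exists_sum_inv_inner_smul_eq_smul_of_isMaxOn
    (fun x hx => hmax x hx.1 hx.2) hmem hfeas hΔθ
  exact exists_inner_sum_smul_eq_one_div_of_sum_inv_inner_smul_eq_smul hfeas hμ

/-- Claim 3.1: a maximizer of `∑ᵢ log(gᵢᵀΔθ)` over the ball of radius `ε` (subject to
`gᵢᵀΔθ > 0`) is, up to positive scaling, `∑ᵢ αᵢgᵢ` where `α > 0` solves `GᵀGα = 1/α`. -/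
theorem stmt_17 {d K : ℕ} (hK : 0 < K) (g : Fin K → EuclideanSpace ℝ (Fin d))
    (hind : LinearIndependent ℝ g) (ε : ℝ) (hε : 0 < ε)
    (Δθ : EuclideanSpace ℝ (Fin d))
    (hmem : ‖Δθ‖ ≤ ε) (hfeas : ∀ i, 0 < ⟪g i, Δθ⟫)
    (hmax : ∀ x : EuclideanSpace ℝ (Fin d), ‖x‖ ≤ ε → (∀ i, 0 < ⟪g i, x⟫) →
      ∑ i, Real.log ⟪g i, x⟫ ≤ ∑ i, Real.log ⟪g i, Δθ⟫) :
    ∃ (c : ℝ) (α : Fin K → ℝ), 0 < c ∧ (∀ i, 0 < α i) ∧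
      (∀ i, ⟪g i, ∑ j, α j • g j⟫ = 1 / α i) ∧
      Δθ = c • ∑ j, α j • g j :=
  stmt_17_general hK g ε Δθ hmem hfeas hmax
end
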